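/- Let n ≥ 1 and let α ∈ ℕ^n be a nonzero multi-index. Then there is a constant C (depending only on n and α) such that for every finitely supported family of real coefficients (c_β)_{β ∈ ℕ^n}, ‖ Σ_β c_β (|β|+n)^{−|α|/2} ∂^α(γ H_β) ‖_{L^2(γ_{-1})} ≤ C ‖ Σ_β c_β γ H_β ‖_{L^2(γ_{-1})}, where γ(x) = π^{−n/2} e^{−|x|^2} and ∂^α = ∂_{x_1}^{α_1}⋯∂_{x_n}^{α_n}. (This expresses the L^2(γ_{-1})-boundedness of the Riesz transform ∂^α 𝒜^{−|α|/2} on the linear span of the eigenfunctions γH_β of 𝒜, whose eigenvalues are |β|+n.) -/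

import Mathlib

open MeasureTheory Real Filter Set

noncomputable def hermiteH (k : ℕ) (s : ℝ) : ℝ :=
  (-1 : ℝ) ^ k * Real.exp (s ^ 2) * iteratedDeriv k (fun t => Real.exp (-t ^ 2)) s

/-- Partial derivative in the j-th coordinate. -/
noncomputable def pderivCoord {n : ℕ} (j : Fin n) (f : (Fin n → ℝ) → ℝ) :
    (Fin n → ℝ) → ℝ :=
  fun x => deriv (fun t => f (Function.update x j t)) (x j)

/-- The iterated partial derivative ∂^α = ∂₁^{α₁} ⋯ ∂ₙ^{αₙ}. -/
noncomputable def multiPderiv {n : ℕ} (α : Fin n → ℕ) (f : (Fin n → ℝ) → ℝ) :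
    (Fin n → ℝ) → ℝ :=
  (List.finRange n).foldr (fun j g => (pderivCoord j)^[α j] g) f

/-- The measure γ₋₁ on ℝⁿ, with density π^{n/2} e^{|x|²} w.r.t. Lebesgue measure. -/
noncomputable def gaussMPi (n : ℕ) : Measure (Fin n → ℝ) :=
  volume.withDensity fun x => ENNReal.ofReal (Real.pi ^ ((n : ℝ) / 2) * Real.exp (∑ j, x j ^ 2))

/-- γ H_β, the eigenfunction of 𝒜 with eigenvalue |β| + n. -/
noncomputable def gaussHermite {n : ℕ} (β : Fin n → ℕ) : (Fin n → ℝ) → ℝ :=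
  fun x => Real.pi ^ (-(n : ℝ) / 2) * Real.exp (-∑ j, x j ^ 2) * ∏ j, hermiteH (β j) (x j)

/-!
Up to the factor `π^{-n/2}`, `γ H_β` is the product of the one-variable functions
`e^{-s²} H_k(s) = (-1)^k (d/ds)^k e^{-s²}`, so `∂^α (γ H_β) = (-1)^{|α|} γ H_{β+α}`.
Integrating by parts against `e^{-s²}` shows that the `γ H_β` are orthogonal in `L²(γ₋₁)` with
`‖γ H_β‖² = 2^{|β|} β!`. Both sides of the inequality are therefore computed coefficientwise, and
it remains to bound `2^{|α|} (β+α)! / β! ≤ (2 (1 + |α|))^{|α|} (|β| + n)^{|α|}`.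
-/

open Polynomial in
noncomputable def physHermite : ℕ → ℝ[X]
  | 0 => 1
  | k + 1 => C 2 * X * physHermite k - derivative (physHermite k)

noncomputable def hermiteFun (k : ℕ) (s : ℝ) : ℝ := exp (-s ^ 2) * (physHermite k).eval s

section OneDim

open Polynomial

lemma hasDerivAt_hermiteFun (k : ℕ) (s : ℝ) :
    HasDerivAt (hermiteFun k) (-hermiteFun (k + 1) s) s := by
  have hgauss : HasDerivAt (fun t : ℝ => exp (-t ^ 2)) (exp (-s ^ 2) * -(2 * s)) s := by
    simpa using ((hasDerivAt_pow 2 s).neg).exp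
  refine (hgauss.mul ((physHermite k).hasDerivAt s)).congr_deriv ?_
  simp only [hermiteFun, physHermite, eval_sub, eval_mul, eval_C, eval_X]
  ring

lemma iteratedDeriv_exp_neg_sq (k : ℕ) :
    iteratedDeriv k (fun t : ℝ => exp (-t ^ 2)) = fun s => (-1) ^ k * hermiteFun k s := by
  induction k with
  | zero => funext s; simp [hermiteFun, physHermite]
  | succ k ih =>
    funext s
    rw [iteratedDeriv_succ, ih, ((hasDerivAt_hermiteFun k s).const_mul _).deriv]
    ring

lemma hermiteH_eq_eval (k : ℕ) (s : ℝ) : hermiteH k s = (physHermite k).eval s := by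
  have hexp : exp (s ^ 2) * exp (-s ^ 2) = 1 := by rw [← exp_add]; simp
  have hsign : (-1 : ℝ) ^ k * (-1) ^ k = 1 := by rw [← mul_pow]; simp
  simp only [hermiteH, iteratedDeriv_exp_neg_sq, hermiteFun]
  linear_combination (physHermite k).eval s * ((-1 : ℝ) ^ k * (-1) ^ k) * hexp +
    (physHermite k).eval s * hsign

lemma natDegree_physHermite_le (k : ℕ) : (physHermite k).natDegree ≤ k := by
  induction k with
  | zero => simp [physHermite]
  | succ k ih =>
    refine (natDegree_sub_le _ _).trans (max_le ?_ ?_)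
    · refine natDegree_mul_le.trans ?_
      have : (C (2 : ℝ) * X).natDegree ≤ 1 := natDegree_mul_le.trans (by simp)
      omega
    · exact (natDegree_derivative_le _).trans (by omega)

lemma coeff_physHermite_self (k : ℕ) : (physHermite k).coeff k = 2 ^ k := by
  induction k with
  | zero => simp [physHermite]
  | succ k ih =>
    have hvanish : (physHermite k).coeff (k + 1 + 1) = 0 :=
      coeff_eq_zero_of_natDegree_lt (by linarith [natDegree_physHermite_le k])
    rw [physHermite, coeff_sub, coeff_derivative, hvanish, mul_assoc, coeff_C_mul, coeff_X_mul,
      ih]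
    ring

lemma iterate_derivative_physHermite_self (k : ℕ) :
    derivative^[k] (physHermite k) = C ((2 : ℝ) ^ k * k.factorial) := by
  have hdeg : (derivative^[k] (physHermite k)).natDegree = 0 := by
    have := natDegree_iterate_derivative (physHermite k) k
    have := natDegree_physHermite_le k
    omega
  rw [eq_C_of_natDegree_eq_zero hdeg, coeff_iterate_derivative, zero_add,
    Nat.descFactorial_self, coeff_physHermite_self, nsmul_eq_mul, mul_comm]

lemma integrable_exp_neg_sq_mul_eval (p : ℝ[X]) :
    Integrable fun s : ℝ => exp (-s ^ 2) * p.eval s := by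
  have hmonomial (i : ℕ) : Integrable fun s : ℝ => s ^ i * exp (-s ^ 2) := by
    simpa [Real.rpow_natCast] using
      integrable_rpow_mul_exp_neg_mul_sq one_pos (s := i) (by linarith [i.cast_nonneg (α := ℝ)])
  simp_rw [eval_eq_sum_range, Finset.mul_sum]
  refine integrable_finsetSum _ fun i _ => ((hmonomial i).const_mul (p.coeff i)).congr ?_
  filter_upwards with s
  ring

lemma integrable_hermiteFun_mul_eval (k : ℕ) (p : ℝ[X]) :
    Integrable fun s : ℝ => hermiteFun k s * p.eval s := by
  simpa [hermiteFun, mul_assoc] using integrable_exp_neg_sq_mul_eval (physHermite k * p)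

lemma integral_hermiteFun_succ_mul_eval (k : ℕ) (q : ℝ[X]) :
    ∫ s, hermiteFun (k + 1) s * q.eval s = ∫ s, hermiteFun k s * (derivative q).eval s := by
  have hparts := integral_mul_deriv_eq_deriv_mul_of_integrable
    (u := hermiteFun k) (v := fun s => q.eval s)
    (fun s _ => hasDerivAt_hermiteFun k s) (fun s _ => q.hasDerivAt s)
    (integrable_hermiteFun_mul_eval k (derivative q))
    ((integrable_hermiteFun_mul_eval (k + 1) q).neg.congr (.of_forall fun s => by simp))
    (integrable_hermiteFun_mul_eval k q)
  simp only [neg_mul, integral_neg] at hparts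
  linarith

lemma integral_hermiteFun_mul_eval (k : ℕ) (q : ℝ[X]) :
    ∫ s, hermiteFun k s * q.eval s = ∫ s, exp (-s ^ 2) * (derivative^[k] q).eval s := by
  induction k generalizing q with
  | zero => simp [hermiteFun, physHermite]
  | succ k ih =>
    rw [integral_hermiteFun_succ_mul_eval, ih, Function.iterate_succ_apply]

lemma integral_hermiteFun_mul_physHermite (j k : ℕ) :
    ∫ s, hermiteFun j s * (physHermite k).eval s =
      if j = k then 2 ^ j * j.factorial * √π else 0 := by
  have hlt {j k : ℕ} (hkj : k < j) : ∫ s, hermiteFun j s * (physHermite k).eval s = 0 := by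
    rw [integral_hermiteFun_mul_eval,
      iterate_derivative_eq_zero ((natDegree_physHermite_le k).trans_lt hkj)]
    simp
  rcases lt_trichotomy j k with hjk | rfl | hkj
  · have hsymm : ∀ s, hermiteFun j s * (physHermite k).eval s =
        hermiteFun k s * (physHermite j).eval s := fun s => by simp only [hermiteFun]; ring
    simp_rw [hsymm, hlt hjk, if_neg hjk.ne]
  · have hgauss : ∫ s : ℝ, exp (-s ^ 2) = √π := by simpa using integral_gaussian 1
    rw [integral_hermiteFun_mul_eval, iterate_derivative_physHermite_self, if_pos rfl]
    simp only [eval_C]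
    rw [integral_mul_const, hgauss, mul_comm]
  · rw [hlt hkj, if_neg hkj.ne']

lemma integrable_exp_neg_sq_mul_hermiteH_mul (a b : ℕ) :
    Integrable fun s => exp (-s ^ 2) * (hermiteH a s * hermiteH b s) := by
  simp_rw [hermiteH_eq_eval, ← eval_mul]
  exact integrable_exp_neg_sq_mul_eval _

lemma integral_exp_neg_sq_mul_hermiteH_mul (a b : ℕ) :
    ∫ s, exp (-s ^ 2) * (hermiteH a s * hermiteH b s) =
      if a = b then 2 ^ a * a.factorial * √π else 0 := by
  simp_rw [hermiteH_eq_eval, ← mul_assoc]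
  exact integral_hermiteFun_mul_physHermite a b

end OneDim

section MultiDim

variable {n : ℕ}

lemma gaussHermite_eq_smul_prod (β : Fin n → ℕ) :
    gaussHermite β = π ^ (-(n : ℝ) / 2) • fun x => ∏ j, hermiteFun (β j) (x j) := by
  funext x
  simp only [gaussHermite, Pi.smul_apply, smul_eq_mul, hermiteFun, hermiteH_eq_eval,
    Finset.prod_mul_distrib, ← Finset.sum_neg_distrib, exp_sum]
  ring

lemma pderivCoord_const_smul (j : Fin n) (c : ℝ) (f : (Fin n → ℝ) → ℝ) :
    pderivCoord j (c • f) = c • pderivCoord j f := by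
  funext x
  exact deriv_const_mul_field c

lemma iterate_pderivCoord_const_smul (j : Fin n) (m : ℕ) (c : ℝ) (f : (Fin n → ℝ) → ℝ) :
    (pderivCoord j)^[m] (c • f) = c • (pderivCoord j)^[m] f :=
  Function.Commute.iterate_left (fun f => pderivCoord_const_smul j c f) m f

lemma pderivCoord_prod {f : Fin n → ℝ → ℝ} {j : Fin n} {c : ℝ} {g : ℝ → ℝ}
    (hf : ∀ t, HasDerivAt (f j) (c * g t) t) :
    pderivCoord j (fun x => ∏ i, f i (x i)) =
      c • fun x => ∏ i, Function.update f j g i (x i) := by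
  funext x
  have hrest (F : Fin n → ℝ → ℝ) (y : Fin n → ℝ) (hy : ∀ i ≠ j, F i (y i) = f i (x i)) :
      ∏ i, F i (y i) = F j (y j) * ∏ i ∈ {j}ᶜ, f i (x i) := by
    rw [Fintype.prod_eq_mul_prod_compl j]
    congr 1
    exact Finset.prod_congr rfl fun i hi => hy i (by simpa using hi)
  have hslice : (fun t => ∏ i, f i (Function.update x j t i)) =
      fun t => f j t * ∏ i ∈ {j}ᶜ, f i (x i) := by
    funext t
    rw [hrest f _ fun i hi => by rw [Function.update_of_ne hi], Function.update_self]
  simp only [pderivCoord, hslice, ((hf (x j)).mul_const _).deriv, Pi.smul_apply, smul_eq_mul]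
  rw [hrest (Function.update f j g) x fun i hi => by rw [Function.update_of_ne hi],
    Function.update_self, mul_assoc]

lemma pderivCoord_gaussHermite (β : Fin n → ℕ) (j : Fin n) :
    pderivCoord j (gaussHermite β) = -gaussHermite (β + Pi.single j 1) := by
  have hupdate : Function.update (fun i => hermiteFun (β i)) j (hermiteFun (β j + 1)) =
      fun i => hermiteFun ((β + Pi.single j 1 : Fin n → ℕ) i) := by
    funext i
    rcases eq_or_ne i j with rfl | hij
    · simp
    · simp [hij]
  rw [gaussHermite_eq_smul_prod, gaussHermite_eq_smul_prod, pderivCoord_const_smul,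
    pderivCoord_prod (c := -1) fun t => by simpa using hasDerivAt_hermiteFun (β j) t,
    hupdate, neg_one_smul, smul_neg]

lemma iterate_pderivCoord_gaussHermite (β : Fin n → ℕ) (j : Fin n) (m : ℕ) :
    (pderivCoord j)^[m] (gaussHermite β) = (-1 : ℝ) ^ m • gaussHermite (β + Pi.single j m) := by
  induction m with
  | zero => simp
  | succ m ih =>
    rw [Function.iterate_succ_apply', ih, pderivCoord_const_smul, pderivCoord_gaussHermite,
      add_assoc, ← Pi.single_add, smul_neg, pow_succ, mul_neg_one, neg_smul]

lemma foldr_iterate_pderivCoord_gaussHermite (α β : Fin n → ℕ) (l : List (Fin n)) :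
    l.foldr (fun j g => (pderivCoord j)^[α j] g) (gaussHermite β) =
      (-1 : ℝ) ^ (l.map α).sum • gaussHermite (β + (l.map fun j => Pi.single j (α j)).sum) := by
  induction l with
  | nil => simp
  | cons j l ih =>
    rw [List.foldr_cons, ih, iterate_pderivCoord_const_smul, iterate_pderivCoord_gaussHermite,
      smul_smul, List.map_cons, List.sum_cons, List.map_cons, List.sum_cons, pow_add, mul_comm,
      add_assoc, add_comm _ (Pi.single j (α j) : Fin n → ℕ)]

lemma multiPderiv_gaussHermite (α β : Fin n → ℕ) :
    multiPderiv α (gaussHermite β) = (-1 : ℝ) ^ (∑ j, α j) • gaussHermite (β + α) := by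
  rw [multiPderiv, foldr_iterate_pderivCoord_gaussHermite, ← Fin.sum_univ_def,
    ← Fin.sum_univ_def, Finset.univ_sum_single]

end MultiDim

section WithDensity

variable {X E : Type*} [MeasurableSpace X] {μ : Measure X} [NormedAddCommGroup E]
  [NormedSpace ℝ E] {ρ : X → ℝ}

lemma integral_withDensity_ofReal (hρ : Measurable ρ) (hρ₀ : ∀ x, 0 ≤ ρ x) (g : X → E) :
    ∫ x, g x ∂μ.withDensity (fun x => ENNReal.ofReal (ρ x)) = ∫ x, ρ x • g x ∂μ := by
  rw [integral_withDensity_eq_integral_toReal_smul hρ.ennreal_ofReal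
    (.of_forall fun _ => ENNReal.ofReal_lt_top)]
  simp_rw [ENNReal.toReal_ofReal (hρ₀ _)]

lemma integrable_withDensity_ofReal_iff (hρ : Measurable ρ) (hρ₀ : ∀ x, 0 ≤ ρ x) {g : X → E} :
    Integrable g (μ.withDensity fun x => ENNReal.ofReal (ρ x)) ↔
      Integrable (fun x => ρ x • g x) μ := by
  rw [integrable_withDensity_iff_integrable_smul' hρ.ennreal_ofReal
    (.of_forall fun _ => ENNReal.ofReal_lt_top)]
  simp_rw [ENNReal.toReal_ofReal (hρ₀ _)]

end WithDensity

lemma eLpNorm_sum_mul_of_orthogonal {X ι : Type*} [MeasurableSpace X] {μ : Measure X}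
    [DecidableEq ι] {φ : ι → X → ℝ} {N : ι → ℝ} (hφ : ∀ i, MemLp (φ i) 2 μ)
    (horth : ∀ i j, ∫ x, φ i x * φ j x ∂μ = if i = j then N i else 0)
    (s : Finset ι) (d : ι → ℝ) :
    eLpNorm (fun x => ∑ i ∈ s, d i * φ i x) 2 μ = ENNReal.ofReal √(∑ i ∈ s, d i ^ 2 * N i) := by
  have hint (i j : ι) : Integrable (fun x => d i * d j * (φ i x * φ j x)) μ :=
    ((hφ i).integrable_mul (hφ j)).const_mul _
  have hsq : ∫ x, (∑ i ∈ s, d i * φ i x) ^ 2 ∂μ = ∑ i ∈ s, d i ^ 2 * N i := by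
    have hexpand (x : X) : (∑ i ∈ s, d i * φ i x) ^ 2 =
        ∑ i ∈ s, ∑ j ∈ s, d i * d j * (φ i x * φ j x) := by
      rw [sq, Finset.sum_mul_sum]
      exact Finset.sum_congr rfl fun i _ => Finset.sum_congr rfl fun j _ => by ring
    simp_rw [hexpand]
    rw [integral_finsetSum _ fun i _ => integrable_finsetSum _ fun j _ => hint i j]
    refine Finset.sum_congr rfl fun i hi => ?_
    rw [integral_finsetSum _ fun j _ => hint i j]
    simp_rw [integral_const_mul, horth, mul_ite, mul_zero,
      Finset.sum_ite_eq, if_pos hi, sq]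
  have hmem : MemLp (fun x => ∑ i ∈ s, d i * φ i x) 2 μ :=
    memLp_finsetSum s fun i _ => (hφ i).const_mul (d i)
  rw [hmem.eLpNorm_eq_integral_rpow_norm two_ne_zero ENNReal.ofNat_ne_top, ← hsq,
    Real.sqrt_eq_rpow]
  simp

section Orthogonality

variable {n : ℕ}

def hermiteNormSq (β : Fin n → ℕ) : ℕ := ∏ j, 2 ^ β j * (β j).factorial

lemma density_mul_gaussHermite_mul (β β' : Fin n → ℕ) (x : Fin n → ℝ) :
    π ^ ((n : ℝ) / 2) * exp (∑ j, x j ^ 2) * (gaussHermite β x * gaussHermite β' x) =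
      ∏ j, π ^ (-(1 : ℝ) / 2) *
        (exp (-x j ^ 2) * (hermiteH (β j) (x j) * hermiteH (β' j) (x j))) := by
  have hπ : π ^ ((n : ℝ) / 2) * (π ^ (-(n : ℝ) / 2) * π ^ (-(n : ℝ) / 2)) =
      ∏ _j : Fin n, π ^ (-(1 : ℝ) / 2) := by
    rw [Finset.prod_const, Finset.card_univ, Fintype.card_fin, ← rpow_natCast,
      ← rpow_mul pi_pos.le, ← rpow_add pi_pos, ← rpow_add pi_pos]
    ring_nf
  have hexp : exp (∑ j, x j ^ 2) * (exp (-∑ j, x j ^ 2) * exp (-∑ j, x j ^ 2)) =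
      ∏ j, exp (-x j ^ 2) := by
    rw [← exp_add, ← exp_add, ← exp_sum, Finset.sum_neg_distrib]
    ring_nf
  simp only [Finset.prod_mul_distrib, ← hπ, ← hexp, gaussHermite]
  ring

lemma integrable_gaussHermite_mul (β β' : Fin n → ℕ) :
    Integrable (fun x => gaussHermite β x * gaussHermite β' x) (gaussMPi n) := by
  rw [gaussMPi, integrable_withDensity_ofReal_iff (by fun_prop) fun x => by positivity]
  simp_rw [smul_eq_mul, density_mul_gaussHermite_mul]
  exact .fin_nat_prod fun j => (integrable_exp_neg_sq_mul_hermiteH_mul _ _).const_mul _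

lemma integral_gaussHermite_mul (β β' : Fin n → ℕ) :
    ∫ x, gaussHermite β x * gaussHermite β' x ∂gaussMPi n =
      if β = β' then (hermiteNormSq β : ℝ) else 0 := by
  rw [gaussMPi, integral_withDensity_ofReal (by fun_prop) fun x => by positivity]
  simp_rw [smul_eq_mul, density_mul_gaussHermite_mul]
  rw [integral_fin_nat_prod_volume_eq_prod (E := fun _ => ℝ) fun j t =>
    π ^ (-(1 : ℝ) / 2) * (exp (-t ^ 2) * (hermiteH (β j) t * hermiteH (β' j) t))]
  simp_rw [integral_const_mul, integral_exp_neg_sq_mul_hermiteH_mul]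
  split_ifs with h
  · subst h
    have hπ : π ^ (-(1 : ℝ) / 2) * √π = 1 := by
      rw [sqrt_eq_rpow, ← rpow_add pi_pos]; norm_num
    simp only [hermiteNormSq, if_true, Nat.cast_prod]
    refine Finset.prod_congr rfl fun j _ => ?_
    push_cast
    linear_combination (2 ^ β j * (β j).factorial : ℝ) * hπ
  · obtain ⟨j, hj⟩ := Function.ne_iff.mp h
    exact Finset.prod_eq_zero (Finset.mem_univ j) (by simp [hj])

lemma continuous_gaussHermite (β : Fin n → ℕ) : Continuous (gaussHermite β) := by
  unfold gaussHermite
  simp only [hermiteH_eq_eval]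
  fun_prop

lemma memLp_gaussHermite (β : Fin n → ℕ) : MemLp (gaussHermite β) 2 (gaussMPi n) :=
  (memLp_two_iff_integrable_sq (continuous_gaussHermite β).aestronglyMeasurable).2 <| by
    simpa only [sq] using integrable_gaussHermite_mul β β

lemma eLpNorm_sum_mul_gaussHermite {ι : Type*} {b : ι → Fin n → ℕ} (hb : b.Injective)
    (s : Finset ι) (d : ι → ℝ) :
    eLpNorm (fun x => ∑ i ∈ s, d i * gaussHermite (b i) x) 2 (gaussMPi n) =
      ENNReal.ofReal √(∑ i ∈ s, d i ^ 2 * hermiteNormSq (b i)) := by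
  classical
  refine eLpNorm_sum_mul_of_orthogonal (fun i => memLp_gaussHermite (b i)) (fun i j => ?_) s d
  simp only [integral_gaussHermite_mul, hb.eq_iff]

end Orthogonality

lemma factorial_add_le_factorial_mul_pow (b a : ℕ) :
    (b + a).factorial ≤ b.factorial * (b + a) ^ a := by
  rw [← Nat.factorial_mul_ascFactorial]
  exact Nat.mul_le_mul_left _ (Nat.ascFactorial_le_pow_add b a)

section WeightBounds

variable {n : ℕ}

lemma hermiteNormSq_add_le (β α : Fin n → ℕ) :
    hermiteNormSq (β + α) ≤ hermiteNormSq β * (2 * (∑ j, β j + ∑ j, α j)) ^ ∑ j, α j := by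
  rw [hermiteNormSq, hermiteNormSq, ← Finset.prod_pow_eq_pow_sum, ← Finset.prod_mul_distrib]
  refine Finset.prod_le_prod' fun j _ => ?_
  have hle : β j + α j ≤ ∑ j, β j + ∑ j, α j := add_le_add
    (Finset.single_le_sum (fun _ _ => Nat.zero_le _) (Finset.mem_univ j))
    (Finset.single_le_sum (fun _ _ => Nat.zero_le _) (Finset.mem_univ j))
  calc 2 ^ (β + α) j * ((β + α) j).factorial
      = 2 ^ β j * 2 ^ α j * (β j + α j).factorial := by rw [Pi.add_apply, pow_add]
    _ ≤ 2 ^ β j * 2 ^ α j * ((β j).factorial * (β j + α j) ^ α j) := by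
      gcongr; exact factorial_add_le_factorial_mul_pow _ _
    _ ≤ 2 ^ β j * 2 ^ α j * ((β j).factorial * (∑ j, β j + ∑ j, α j) ^ α j) := by gcongr
    _ = 2 ^ β j * (β j).factorial * (2 * (∑ j, β j + ∑ j, α j)) ^ α j := by rw [mul_pow]; ring

lemma rpow_sq_mul_hermiteNormSq_add_le (hn : 1 ≤ n) (α β : Fin n → ℕ) :
    (((∑ j, β j : ℝ) + n) ^ (-(∑ j, α j : ℝ) / 2)) ^ 2 * hermiteNormSq (β + α) ≤
      (2 * (1 + ∑ j, α j : ℝ)) ^ (∑ j, α j) * hermiteNormSq β := by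
  set A := ∑ j, α j
  set B := ∑ j, β j
  have hpos : (0 : ℝ) < B + n := by positivity
  have hsq : (((B : ℝ) + n) ^ (-(A : ℝ) / 2)) ^ 2 = (((B : ℝ) + n) ^ A)⁻¹ := by
    rw [← rpow_natCast _ 2, ← rpow_mul hpos.le, ← rpow_natCast, ← rpow_neg hpos.le]
    push_cast
    ring_nf
  have hbase : 2 * (B + A) ≤ 2 * (1 + A) * (B + n) := by nlinarith
  have hnat : hermiteNormSq (β + α) ≤ hermiteNormSq β * (2 * (1 + A) * (B + n)) ^ A :=
    (hermiteNormSq_add_le β α).trans (Nat.mul_le_mul_left _ (Nat.pow_le_pow_left hbase _))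
  push_cast [← Nat.cast_sum]
  rw [hsq, inv_mul_le_iff₀ (by positivity)]
  calc (hermiteNormSq (β + α) : ℝ) ≤ hermiteNormSq β * (2 * (1 + A) * (B + n)) ^ A := by
        exact_mod_cast hnat
    _ = _ := by rw [mul_pow]; ring

end WeightBounds

theorem riesz_L2_bounded_general (n : ℕ) (hn : 1 ≤ n) (α : Fin n → ℕ) :
    ∃ C : ℝ, ∀ c : (Fin n → ℕ) →₀ ℝ,
      eLpNorm (fun x => ∑ β ∈ c.support,
          c β * ((∑ j, β j : ℝ) + n) ^ (-(∑ j, α j : ℝ) / 2) *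
            multiPderiv α (gaussHermite β) x) 2 (gaussMPi n) ≤
        ENNReal.ofReal C *
          eLpNorm (fun x => ∑ β ∈ c.support, c β * gaussHermite β x) 2 (gaussMPi n) := by
  set K : ℝ := (2 * (1 + ∑ j, α j : ℝ)) ^ (∑ j, α j)
  refine ⟨√K, fun c => ?_⟩
  have hderiv (β : Fin n → ℕ) (x : Fin n → ℝ) :
      c β * ((∑ j, β j : ℝ) + n) ^ (-(∑ j, α j : ℝ) / 2) * multiPderiv α (gaussHermite β) x =
        c β * ((∑ j, β j : ℝ) + n) ^ (-(∑ j, α j : ℝ) / 2) * (-1) ^ (∑ j, α j) *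
          gaussHermite (β + α) x := by
    rw [multiPderiv_gaussHermite, Pi.smul_apply, smul_eq_mul]
    ring
  simp_rw [hderiv]
  rw [eLpNorm_sum_mul_gaussHermite (add_left_injective α),
    eLpNorm_sum_mul_gaussHermite (b := fun β => β) Function.injective_id,
    ← ENNReal.ofReal_mul (sqrt_nonneg _), ← sqrt_mul (by positivity), Finset.mul_sum]
  refine ENNReal.ofReal_le_ofReal (sqrt_le_sqrt (Finset.sum_le_sum fun β _ => ?_))
  have hsign : ((-1 : ℝ) ^ ∑ j, α j) ^ 2 = 1 := by rw [← pow_mul, Even.neg_one_pow ⟨_, by ring⟩]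
  calc (c β * ((∑ j, β j : ℝ) + n) ^ (-(∑ j, α j : ℝ) / 2) * (-1) ^ (∑ j, α j)) ^ 2 *
        hermiteNormSq (β + α)
      = c β ^ 2 * ((((∑ j, β j : ℝ) + n) ^ (-(∑ j, α j : ℝ) / 2)) ^ 2 *
          hermiteNormSq (β + α)) := by rw [mul_pow, hsign]; ring
    _ ≤ c β ^ 2 * (K * hermiteNormSq β) :=
      mul_le_mul_of_nonneg_left (rpow_sq_mul_hermiteNormSq_add_le hn α β) (sq_nonneg _)
    _ = K * (c β ^ 2 * hermiteNormSq β) := by ring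

/-- L²(γ₋₁)-boundedness of the Riesz transform ∂^α 𝒜^{-|α|/2} on the linear
span of the eigenfunctions γH_β of 𝒜. -/
theorem riesz_L2_bounded (n : ℕ) (hn : 1 ≤ n) (α : Fin n → ℕ) (hα : α ≠ 0) :
    ∃ C : ℝ, ∀ c : (Fin n → ℕ) →₀ ℝ,
      eLpNorm (fun x => ∑ β ∈ c.support,
          c β * ((∑ j, β j : ℝ) + n) ^ (-(∑ j, α j : ℝ) / 2) *
            multiPderiv α (gaussHermite β) x) 2 (gaussMPi n) ≤
        ENNReal.ofReal C *
          eLpNorm (fun x => ∑ β ∈ c.support, c β * gaussHermite β x) 2 (gaussMPi n) :=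
  riesz_L2_bounded_general n hn α
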